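/- Let U = [[a,b],[c,d]] be a 2×2 unitary complex matrix with abcd ≠ 0. Define Φ_s as the set of unit vectors φ = (α,β) ∈ ℂ² such that Pr(X_n^φ = k) = Pr(X_n^φ = −k) for all n ∈ ℕ, n ≥ 1 and all k ∈ ℤ; Φ_0 as the set of unit vectors φ such that E(X_n^φ) = 0 for all n ∈ ℕ, n ≥ 1; and Φ_⊥ as the set of unit vectors φ = (α,β) with |α| = |β| = 1/√2 and aα·conj(bβ) + conj(aα)·bβ = 0. Then Φ_s = Φ_0 = Φ_⊥. -/

import Mathlib

/-- The one-dimensional quantum walk with coin `U = [[a,b],[c,d]]` and initial qubit `φ`: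
`konnoWalk a b c d φ n k = Ψ(k,n)`. -/
noncomputable def konnoWalk (a b c d : ℂ) (φ : ℂ × ℂ) : ℕ → ℤ → ℂ × ℂ
  | 0, k => if k = 0 then φ else (0, 0)
  | n + 1, k =>
      (a * (konnoWalk a b c d φ n (k + 1)).1 + b * (konnoWalk a b c d φ n (k + 1)).2,
       c * (konnoWalk a b c d φ n (k - 1)).1 + d * (konnoWalk a b c d φ n (k - 1)).2)

/-- `Pr(X_n^φ = k)`. -/
noncomputable def konnoProb (a b c d : ℂ) (φ : ℂ × ℂ) (n : ℕ) (k : ℤ) : ℝ :=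
  ‖(konnoWalk a b c d φ n k).1‖ ^ 2 + ‖(konnoWalk a b c d φ n k).2‖ ^ 2

/-!
Write `A = ‖a‖²`, `B = ‖b‖²`, `Δ = ‖α‖² - ‖β‖²` and `R = aα·conj(bβ) + conj(aα)·bβ`. For a unitary
coin the first and third moments of the walk are `E(X₁) = -(A - B)Δ - 2R` and
`E(X₃) = (3A² - AB + 2B²)E(X₁) - BΔ`, so if both vanish then `Δ = 0` (as `b ≠ 0`) and `R = 0`,
i.e. `φ ∈ Φ_⊥`. Conversely, for `φ ∈ Φ_⊥` unitarity gives `acα² = bdβ²`, and then `Ψ(-k, n)` is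
`Ψ(k, n)` with its components swapped and multiplied by unimodular factors, so the distribution is
symmetric; a symmetric distribution has mean zero.
-/

open ComplexConjugate

theorem Function.Odd.tsum_eq_zero {ι α : Type*} [InvolutiveNeg ι] [AddCommGroup α]
    [TopologicalSpace α] [IsTopologicalAddGroup α] [T2Space α] [IsAddTorsionFree α] {f : ι → α}
    (hf : f.Odd) :
    ∑' k, f k = 0 := by
  have h : ∑' k, f k = -∑' k, f k := by
    rw [← tsum_neg, ← tsum_comp_neg]
    exact tsum_congr hf
  exact neg_eq_self.mp h.symm

theorem Real.eq_one_div_sqrt_two_iff {r : ℝ} (hr : 0 ≤ r) : r = 1 / √2 ↔ r ^ 2 = 1 / 2 := by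
  constructor
  · rintro rfl
    rw [div_pow, Real.sq_sqrt zero_le_two, one_pow]
  · intro h
    rw [← Real.sqrt_sq hr, h, one_div, one_div, Real.sqrt_inv]

theorem Complex.norm_eq_norm_of_mul_conj_eq {z w : ℂ} (h : z * conj z = w * conj w) :
    ‖z‖ = ‖w‖ := by
  rw [Complex.mul_conj', Complex.mul_conj'] at h
  exact (sq_eq_sq₀ (norm_nonneg z) (norm_nonneg w)).mp (by exact_mod_cast h)

section unitary

variable {a b c d : ℂ}

theorem orthonormal_rows_of_mem_unitaryGroup_fin_two
    (hU : !![a, b; c, d] ∈ Matrix.unitaryGroup (Fin 2) ℂ) :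
    a * conj a + b * conj b = 1 ∧ a * conj c + b * conj d = 0 ∧ c * conj c + d * conj d = 1 := by
  have h := Matrix.mem_unitaryGroup_iff.mp hU
  refine ⟨?_, ?_, ?_⟩
  · simpa [Matrix.mul_apply, Fin.sum_univ_two] using congrFun₂ h 0 0
  · simpa [Matrix.mul_apply, Fin.sum_univ_two] using congrFun₂ h 0 1
  · simpa [Matrix.mul_apply, Fin.sum_univ_two] using congrFun₂ h 1 1

theorem orthonormal_cols_of_mem_unitaryGroup_fin_two
    (hU : !![a, b; c, d] ∈ Matrix.unitaryGroup (Fin 2) ℂ) :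
    conj a * a + conj c * c = 1 ∧ conj a * b + conj c * d = 0 ∧ conj b * b + conj d * d = 1 := by
  have h := Matrix.mem_unitaryGroup_iff'.mp hU
  refine ⟨?_, ?_, ?_⟩
  · simpa [Matrix.mul_apply, Fin.sum_univ_two] using congrFun₂ h 0 0
  · simpa [Matrix.mul_apply, Fin.sum_univ_two] using congrFun₂ h 0 1
  · simpa [Matrix.mul_apply, Fin.sum_univ_two] using congrFun₂ h 1 1

theorem mul_conj_eq_of_mem_unitaryGroup_fin_two
    (hU : !![a, b; c, d] ∈ Matrix.unitaryGroup (Fin 2) ℂ) :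
    c * conj c = b * conj b ∧ d * conj d = a * conj a := by
  obtain ⟨hab, -, hcd⟩ := orthonormal_rows_of_mem_unitaryGroup_fin_two hU
  obtain ⟨hac, -, -⟩ := orthonormal_cols_of_mem_unitaryGroup_fin_two hU
  constructor
  · linear_combination hac - hab
  · linear_combination hcd - hac

end unitary

noncomputable def konnoMean (a b c d : ℂ) (φ : ℂ × ℂ) (n : ℕ) : ℝ :=
  ∑' k : ℤ, (k : ℝ) * konnoProb a b c d φ n k

section walk

variable (a b c d : ℂ) (φ : ℂ × ℂ)

theorem konnoMean_eq_zero_of_symmetric {n : ℕ}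
    (h : ∀ k : ℤ, konnoProb a b c d φ n k = konnoProb a b c d φ n (-k)) :
    konnoMean a b c d φ n = 0 :=
  Function.Odd.tsum_eq_zero fun k => by rw [← h]; push_cast; ring

theorem konnoWalk_eq_zero_of_lt_natAbs {n : ℕ} {k : ℤ} (hk : n < k.natAbs) :
    konnoWalk a b c d φ n k = 0 := by
  induction n generalizing k with
  | zero => simp [konnoWalk, show k ≠ 0 by omega]
  | succ n ih => simp [konnoWalk, ih (k := k + 1) (by omega), ih (k := k - 1) (by omega)]

theorem konnoMean_eq_sum_Icc (n : ℕ) :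
    konnoMean a b c d φ n = ∑ k ∈ Finset.Icc (-(n : ℤ)) n, (k : ℝ) * konnoProb a b c d φ n k :=
  tsum_eq_sum fun k hk => by
    rw [Finset.mem_Icc] at hk
    simp [konnoProb, konnoWalk_eq_zero_of_lt_natAbs a b c d φ (n := n) (k := k) (by omega)]

theorem konnoMean_one :
    konnoMean a b c d φ 1 = ‖c * φ.1 + d * φ.2‖ ^ 2 - ‖a * φ.1 + b * φ.2‖ ^ 2 := by
  rw [konnoMean_eq_sum_Icc, show Finset.Icc (-((1 : ℕ) : ℤ)) (1 : ℕ) = {-1, 0, 1} from rfl]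
  simp [konnoProb, konnoWalk]
  ring

theorem konnoMean_three {x y : ℂ} (hx : a * φ.1 + b * φ.2 = x) (hy : c * φ.1 + d * φ.2 = y) :
    konnoMean a b c d φ 3 = 3 * ‖d * (d * y)‖ ^ 2 + ‖b * (d * y)‖ ^ 2
      + ‖c * (b * y) + d * (c * x)‖ ^ 2 - ‖a * (b * y) + b * (c * x)‖ ^ 2
      - ‖c * (a * x)‖ ^ 2 - 3 * ‖a * (a * x)‖ ^ 2 := by
  rw [konnoMean_eq_sum_Icc,
    show Finset.Icc (-((3 : ℕ) : ℤ)) (3 : ℕ) = {-3, -2, -1, 0, 1, 2, 3} from rfl]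
  simp [konnoProb, konnoWalk, hx, hy]
  ring

end walk

section unitaryCoin

variable {a b c d : ℂ}

theorem konnoMean_one_eq (hU : !![a, b; c, d] ∈ Matrix.unitaryGroup (Fin 2) ℂ) (φ : ℂ × ℂ) :
    (konnoMean a b c d φ 1 : ℂ) = -(‖a‖ ^ 2 - ‖b‖ ^ 2) * (‖φ.1‖ ^ 2 - ‖φ.2‖ ^ 2)
      - 2 * (a * φ.1 * conj (b * φ.2) + conj (a * φ.1) * (b * φ.2)) := by
  obtain ⟨hc, hd⟩ := mul_conj_eq_of_mem_unitaryGroup_fin_two hU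
  obtain ⟨-, hcol, -⟩ := orthonormal_cols_of_mem_unitaryGroup_fin_two hU
  have hcol' : a * conj b + c * conj d = 0 := by simpa using congrArg conj hcol
  obtain ⟨α, β⟩ := φ
  rw [konnoMean_one]
  push_cast
  simp only [← Complex.mul_conj', map_add, map_mul]
  linear_combination (α * conj α) * hc + (β * conj β) * hd + (α * conj β) * hcol'
    + (conj α * β) * hcol

theorem ofReal_konnoMean_three (hU : !![a, b; c, d] ∈ Matrix.unitaryGroup (Fin 2) ℂ)
    (φ : ℂ × ℂ) {x y : ℂ} (hx : a * φ.1 + b * φ.2 = x) (hy : c * φ.1 + d * φ.2 = y) :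
    (konnoMean a b c d φ 3 : ℂ) = (3 * (a * conj a) ^ 2 + (b * conj b) ^ 2)
      * (y * conj y - x * conj x)
      + 2 * (b * conj b) * (b * conj d * y * conj x + conj b * d * conj y * x) := by
  obtain ⟨-, hrow, -⟩ := orthonormal_rows_of_mem_unitaryGroup_fin_two hU
  obtain ⟨hc, hd⟩ := mul_conj_eq_of_mem_unitaryGroup_fin_two hU
  have hrow' : conj a * c + conj b * d = 0 := by simpa using congrArg conj hrow
  rw [konnoMean_three a b c d φ hx hy]
  push_cast
  simp only [← Complex.mul_conj', map_add, map_mul]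
  linear_combination (3 * (d * conj d + a * conj a) * (y * conj y) + b * conj b * (y * conj y)
      + c * conj c * (x * conj x)) * hd
    + (b * conj b * (y * conj y) + b * conj d * y * conj x + conj b * d * conj y * x
      - b * conj b * (x * conj x)) * hc
    - b * conj b * y * conj x * hrow - b * conj b * x * conj y * hrow'

theorem konnoMean_three_eq (hU : !![a, b; c, d] ∈ Matrix.unitaryGroup (Fin 2) ℂ) (φ : ℂ × ℂ) :
    konnoMean a b c d φ 3 = (3 * ‖a‖ ^ 4 - ‖a‖ ^ 2 * ‖b‖ ^ 2 + 2 * ‖b‖ ^ 4) * konnoMean a b c d φ 1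
      - ‖b‖ ^ 2 * (‖φ.1‖ ^ 2 - ‖φ.2‖ ^ 2) := by
  obtain ⟨hab, -, -⟩ := orthonormal_rows_of_mem_unitaryGroup_fin_two hU
  obtain ⟨-, hcol, -⟩ := orthonormal_cols_of_mem_unitaryGroup_fin_two hU
  obtain ⟨-, hd⟩ := mul_conj_eq_of_mem_unitaryGroup_fin_two hU
  have hcol' : a * conj b + c * conj d = 0 := by simpa using congrArg conj hcol
  have hE1 := konnoMean_one_eq hU φ
  have hE3 := ofReal_konnoMean_three hU φ rfl rfl
  obtain ⟨α, β⟩ := φ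
  have hE1' : (c * α + d * β) * conj (c * α + d * β) - (a * α + b * β) * conj (a * α + b * β)
      = konnoMean a b c d (α, β) 1 := by
    rw [konnoMean_one]
    push_cast
    simp only [← Complex.mul_conj']
  have hcross : b * conj d * (c * α + d * β) * conj (a * α + b * β)
        + conj b * d * conj (c * α + d * β) * (a * α + b * β)
      = -2 * (a * conj a) * (b * conj b) * (α * conj α - β * conj β)
        + (a * conj a - b * conj b) * (a * α * (conj b * conj β) + conj a * conj α * (b * β)) := by
    simp only [map_add, map_mul]
    linear_combination (conj a * b * α * conj α + b * conj b * α * conj β) * hcol'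
      + (conj a * b * conj α * β + b * conj b * β * conj β) * hd
      + (a * conj b * α * conj α + b * conj b * conj α * β) * hcol
      + (a * conj b * α * conj β + b * conj b * β * conj β) * hd
  apply Complex.ofReal_injective
  rw [show ‖a‖ ^ 4 = (‖a‖ ^ 2) ^ 2 by ring, show ‖b‖ ^ 4 = (‖b‖ ^ 2) ^ 2 by ring]
  push_cast
  simp only [← Complex.mul_conj', map_mul] at hE1 ⊢
  rw [hE3]
  linear_combination (3 * (a * conj a) ^ 2 + (b * conj b) ^ 2) * hE1' + 2 * (b * conj b) * hcross
    + (b * conj b) * (a * conj a - b * conj b) * hE1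
    - (b * conj b) * (α * conj α - β * conj β) * (1 + a * conj a + b * conj b) * hab

theorem mul_mul_sq_eq_of_cross_eq_zero (hU : !![a, b; c, d] ∈ Matrix.unitaryGroup (Fin 2) ℂ)
    (ha : a ≠ 0) {α β : ℂ} (hβ : β ≠ 0) (hαβ : ‖α‖ = ‖β‖)
    (hR : a * α * conj (b * β) + conj (a * α) * (b * β) = 0) :
    a * c * α ^ 2 = b * d * β ^ 2 := by
  obtain ⟨-, hrow, -⟩ := orthonormal_rows_of_mem_unitaryGroup_fin_two hU
  have hrow' : conj a * c + conj b * d = 0 := by simpa using congrArg conj hrow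
  have hαβ' : α * conj α = β * conj β := by
    rw [Complex.mul_conj', Complex.mul_conj', hαβ]
  simp only [map_mul] at hR
  have h : (a * conj b * α ^ 2 + conj a * b * β ^ 2) * conj β = 0 := by
    linear_combination α * hR - conj a * b * β * hαβ'
  have h' : (a * c * α ^ 2 - b * d * β ^ 2) * conj a = 0 := by
    linear_combination a * α ^ 2 * hrow' - d * (mul_eq_zero.mp h).resolve_right (by simpa)
  exact sub_eq_zero.mp ((mul_eq_zero.mp h').resolve_right (by simpa))

end unitaryCoin

section reflection

variable {a b c d α β : ℂ}

-- The recursion preserves this relation for all `k` at once; `acα² = bdβ²` gives it at time 0.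
theorem konnoWalk_neg (ha : a ≠ 0) (hb : b ≠ 0) (hd : d ≠ 0) (hβ : β ≠ 0)
    (h : a * c * α ^ 2 = b * d * β ^ 2) (n : ℕ) (k : ℤ) :
    konnoWalk a b c d (α, β) n (-k) =
      ((d / a) ^ (-k) * (α / β) * (konnoWalk a b c d (α, β) n k).2,
        (d / a) ^ (-k) * (α / β) * (c * a / (b * d)) * (konnoWalk a b c d (α, β) n k).1) := by
  induction n generalizing k with
  | zero =>
    by_cases hk : k = 0
    · subst hk
      simp only [konnoWalk, neg_zero, if_true, zpow_zero, one_mul, Prod.mk.injEq]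
      constructor
      · field_simp
      · field_simp
        linear_combination -h
    · simp [konnoWalk, hk]
  | succ n ih =>
    have hda : d / a ≠ 0 := div_ne_zero hd ha
    simp only [konnoWalk, show -k + 1 = -(k - 1) by ring, show -k - 1 = -(k + 1) by ring,
      ih (k - 1), ih (k + 1), Prod.mk.injEq]
    rw [show -(k - 1) = -k + 1 by ring, show -(k + 1) = -k - 1 by ring, zpow_add₀ hda,
      zpow_sub₀ hda, zpow_one]
    constructor <;> field_simp <;> ring

theorem konnoProb_neg (ha : a ≠ 0) (hb : b ≠ 0) (hd : d ≠ 0) (hβ : β ≠ 0)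
    (h : a * c * α ^ 2 = b * d * β ^ 2) (hda : ‖d‖ = ‖a‖) (hcb : ‖c‖ = ‖b‖) (hαβ : ‖α‖ = ‖β‖)
    (n : ℕ) (k : ℤ) :
    konnoProb a b c d (α, β) n (-k) = konnoProb a b c d (α, β) n k := by
  have hna : ‖a‖ ≠ 0 := norm_ne_zero_iff.mpr ha
  have hnb : ‖b‖ ≠ 0 := norm_ne_zero_iff.mpr hb
  have hnβ : ‖β‖ ≠ 0 := norm_ne_zero_iff.mpr hβ
  rw [konnoProb, konnoProb, konnoWalk_neg ha hb hd hβ h n k]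
  simp only [norm_mul, norm_zpow, norm_div, hda, hcb, hαβ, div_self hna, div_self hnβ, one_zpow,
    one_mul, mul_comm ‖b‖ ‖a‖, div_self (mul_ne_zero hna hnb)]
  ring

end reflection

section qubits

variable (a b c d : ℂ)

def symmetricQubits : Set (ℂ × ℂ) :=
  {φ | ‖φ.1‖ ^ 2 + ‖φ.2‖ ^ 2 = 1 ∧
    ∀ n : ℕ, 1 ≤ n → ∀ k : ℤ, konnoProb a b c d φ n k = konnoProb a b c d φ n (-k)}

def zeroMeanQubits : Set (ℂ × ℂ) :=
  {φ | ‖φ.1‖ ^ 2 + ‖φ.2‖ ^ 2 = 1 ∧ ∀ n : ℕ, 1 ≤ n → konnoMean a b c d φ n = 0}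

def perpQubits : Set (ℂ × ℂ) :=
  {φ | ‖φ.1‖ = 1 / √2 ∧ ‖φ.2‖ = 1 / √2 ∧
    a * φ.1 * conj (b * φ.2) + conj (a * φ.1) * (b * φ.2) = 0}

theorem symmetricQubits_subset_zeroMeanQubits :
    symmetricQubits a b c d ⊆ zeroMeanQubits a b c d :=
  fun _ ⟨hφ, hsymm⟩ => ⟨hφ, fun n hn => konnoMean_eq_zero_of_symmetric a b c d _ (hsymm n hn)⟩

variable {a b c d}

theorem zeroMeanQubits_subset_perpQubits (hU : !![a, b; c, d] ∈ Matrix.unitaryGroup (Fin 2) ℂ)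
    (hb : b ≠ 0) : zeroMeanQubits a b c d ⊆ perpQubits a b := by
  rintro ⟨α, β⟩ ⟨hφ, hmean⟩
  have hE1 := hmean 1 le_rfl
  have hΔ : ‖α‖ ^ 2 - ‖β‖ ^ 2 = 0 := by
    have hE3 := konnoMean_three_eq hU (α, β)
    rw [hmean 3 (by norm_num), hE1, mul_zero, zero_sub, zero_eq_neg] at hE3
    exact (mul_eq_zero.mp hE3).resolve_left (by positivity)
  have hR := konnoMean_one_eq hU (α, β)
  have hΔc : (‖α‖ : ℂ) ^ 2 - (‖β‖ : ℂ) ^ 2 = 0 := by exact_mod_cast hΔ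
  rw [hE1, Complex.ofReal_zero] at hR
  refine ⟨(Real.eq_one_div_sqrt_two_iff (norm_nonneg α)).mpr (by linarith),
    (Real.eq_one_div_sqrt_two_iff (norm_nonneg β)).mpr (by linarith), ?_⟩
  linear_combination (hR - (‖a‖ ^ 2 - ‖b‖ ^ 2 : ℂ) * hΔc) / 2

theorem perpQubits_subset_symmetricQubits (hU : !![a, b; c, d] ∈ Matrix.unitaryGroup (Fin 2) ℂ)
    (ha : a ≠ 0) (hb : b ≠ 0) (hd : d ≠ 0) : perpQubits a b ⊆ symmetricQubits a b c d := by
  rintro ⟨α, β⟩ ⟨hα, hβ, hR⟩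
  obtain ⟨hc, hd'⟩ := mul_conj_eq_of_mem_unitaryGroup_fin_two hU
  have hcb := Complex.norm_eq_norm_of_mul_conj_eq hc
  have hda := Complex.norm_eq_norm_of_mul_conj_eq hd'
  have hβ0 : β ≠ 0 := norm_ne_zero_iff.mp (by rw [hβ]; positivity)
  have hαβ : ‖α‖ = ‖β‖ := hα.trans hβ.symm
  have hkey := mul_mul_sq_eq_of_cross_eq_zero hU ha hβ0 hαβ hR
  refine ⟨?_, fun n _ k => (konnoProb_neg ha hb hd hβ0 hkey hda hcb hαβ n k).symm⟩
  rw [(Real.eq_one_div_sqrt_two_iff (norm_nonneg α)).mp hα,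
    (Real.eq_one_div_sqrt_two_iff (norm_nonneg β)).mp hβ]
  norm_num

end qubits

theorem konno_symmetry_of_distribution
    (a b c d : ℂ)
    (hU : !![a, b; c, d] ∈ Matrix.unitaryGroup (Fin 2) ℂ)
    (habcd : a * b * c * d ≠ 0) :
    ({φ : ℂ × ℂ | ‖φ.1‖ ^ 2 + ‖φ.2‖ ^ 2 = 1 ∧
        ∀ n : ℕ, 1 ≤ n → ∀ k : ℤ, konnoProb a b c d φ n k = konnoProb a b c d φ n (-k)} =
      {φ : ℂ × ℂ | ‖φ.1‖ ^ 2 + ‖φ.2‖ ^ 2 = 1 ∧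
        ∀ n : ℕ, 1 ≤ n → (∑' k : ℤ, (k : ℝ) * konnoProb a b c d φ n k) = 0}) ∧
    ({φ : ℂ × ℂ | ‖φ.1‖ ^ 2 + ‖φ.2‖ ^ 2 = 1 ∧
        ∀ n : ℕ, 1 ≤ n → (∑' k : ℤ, (k : ℝ) * konnoProb a b c d φ n k) = 0} =
      {φ : ℂ × ℂ | ‖φ.1‖ = 1 / Real.sqrt 2 ∧ ‖φ.2‖ = 1 / Real.sqrt 2 ∧
        a * φ.1 * (starRingEnd ℂ) (b * φ.2) + (starRingEnd ℂ) (a * φ.1) * (b * φ.2) = 0}) := by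
  obtain ⟨⟨⟨ha, hb⟩, -⟩, hd⟩ : ((a ≠ 0 ∧ b ≠ 0) ∧ c ≠ 0) ∧ d ≠ 0 := by
    simpa only [mul_ne_zero_iff] using habcd
  have hsz := symmetricQubits_subset_zeroMeanQubits a b c d
  have hzp := zeroMeanQubits_subset_perpQubits hU hb
  have hps := perpQubits_subset_symmetricQubits hU ha hb hd
  exact ⟨hsz.antisymm (hps.trans' hzp), hzp.antisymm (hsz.trans' hps)⟩
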